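/- arXiv:2002.00400 — 2 statements merged into one kernel-verified Lean document; each statement's English description precedes it below -/
import Mathlib

section
/- Let f be a holomorphic self-mapping of the unit disc Δ ⊂ ℂ and suppose there is a sequence {ζ_k} in Δ converging non-tangentially to 1 such that f(ζ_k) = ζ_k + O(|ζ_k − 1|³) as k → ∞. Then Re((f(ζ) − ζ)/(ζ − 1)²) ≥ 0 for all ζ ∈ Δ. -/
open Complex Metric Set Filter
open scoped ComplexOrder

noncomputable section

/-- `ℂⁿ` as a Euclidean space. -/
abbrev Cn (n : ℕ) : Type := EuclideanSpace ℂ (Fin n)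

/-- The open unit disc `Δ ⊂ ℂ`. -/
def unitDisc : Set ℂ := Metric.ball 0 1

/-- The Hermitian inner product `⟨v, w⟩ = ∑ⱼ vⱼ * conj wⱼ` on `ℂⁿ`
(linear in the first variable, as in the paper). -/
def herm {n : ℕ} (v w : Cn n) : ℂ := ∑ j, v j * (starRingEnd ℂ) (w j)

/-- Componentwise complex conjugation of a vector in `ℂⁿ`. -/
def conjVec {n : ℕ} (v : Cn n) : Cn n := WithLp.toLp 2 (fun j => (starRingEnd ℂ) (v j))

/-- The Poincaré distance `tanh⁻¹ |(z - w)/(1 - z * conj w)|` on the unit disc. -/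
def poincareDist (z w : ℂ) : ℝ :=
  (1 / 2) * Real.log ((1 + ‖(z - w) / (1 - z * (starRingEnd ℂ) w)‖) /
    (1 - ‖(z - w) / (1 - z * (starRingEnd ℂ) w)‖))

/-- The Kobayashi distance on a domain `Ω ⊆ ℂⁿ`, defined via chains of
holomorphic discs. -/
def kobayashiDist {n : ℕ} (Ω : Set (Cn n)) (z w : Cn n) : ℝ :=
  sInf {d : ℝ | ∃ (m : ℕ) (zs : Fin (m + 1) → Cn n) (φ : Fin m → ℂ → Cn n) (a b : Fin m → ℂ),
    zs 0 = z ∧ zs (Fin.last m) = w ∧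
    (∀ j : Fin m, DifferentiableOn ℂ (φ j) unitDisc ∧ MapsTo (φ j) unitDisc Ω ∧
      a j ∈ unitDisc ∧ b j ∈ unitDisc ∧
      φ j (a j) = zs j.castSucc ∧ φ j (b j) = zs j.succ) ∧
    d = ∑ j : Fin m, poincareDist (a j) (b j)}

/-- A complex geodesic of `Ω`: a holomorphic map `Δ → Ω` which is an isometry
between the Poincaré distance and the Kobayashi distance. -/
def IsComplexGeodesic {n : ℕ} (Ω : Set (Cn n)) (φ : ℂ → Cn n) : Prop :=
  DifferentiableOn ℂ φ unitDisc ∧ MapsTo φ unitDisc Ω ∧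
    ∀ ζ₁ ∈ unitDisc, ∀ ζ₂ ∈ unitDisc,
      kobayashiDist Ω (φ ζ₁) (φ ζ₂) = poincareDist ζ₁ ζ₂

/-- The Stolz (non-tangential approach) region in the unit disc with vertex `1`
and aperture `β`. -/
def stolzRegion (β : ℝ) : Set ℂ :=
  {ζ ∈ unitDisc | ‖ζ - 1‖ < β * (1 - ‖ζ‖)}

/-- The non-tangential approach region `Γ_β(p) = {z ∈ Ω : |z - p| < β dist(z, ∂Ω)}`. -/
def ntRegion {n : ℕ} (Ω : Set (Cn n)) (p : Cn n) (β : ℝ) : Set (Cn n) :=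
  {z ∈ Ω | ‖z - p‖ < β * Metric.infDist z (frontier Ω)}

/-- The Wirtinger derivative `∂f/∂z_j` of `f : ℂⁿ → ℂ` at `p`. -/
def wder {n : ℕ} (f : Cn n → ℂ) (p : Cn n) (j : Fin n) : ℂ :=
  (1 / 2) * (fderiv ℝ f p (EuclideanSpace.single j 1) -
    Complex.I * fderiv ℝ f p (EuclideanSpace.single j Complex.I))

/-- The conjugate Wirtinger derivative `∂f/∂z̄_j` of `f : ℂⁿ → ℂ` at `p`. -/
def wderBar {n : ℕ} (f : Cn n → ℂ) (p : Cn n) (j : Fin n) : ℂ :=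
  (1 / 2) * (fderiv ℝ f p (EuclideanSpace.single j 1) +
    Complex.I * fderiv ℝ f p (EuclideanSpace.single j Complex.I))

/-- Iterated holomorphic partial derivatives `∂^{|ν|}/∂z^ν`, the multi-index
being recorded as a list of coordinate directions. -/
def wderMulti {n : ℕ} : List (Fin n) → (Cn n → ℂ) → Cn n → ℂ
  | [], f => f
  | j :: l, f => fun p => wder (wderMulti l f) p j

/-- The complex tangent space `T_p^{1,0}∂Ω = {v : ∑ⱼ ∂r/∂z_j(p) vⱼ = 0}` associated
with a defining function `r`. -/
def cxTangentAt {n : ℕ} (r : Cn n → ℝ) (p : Cn n) : Set (Cn n) :=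
  {v | ∑ j, wder (fun z => (r z : ℂ)) p j * v j = 0}

/-- The Levi form `∑_{j,k} ∂²r/∂z_j∂z̄_k(p) vⱼ v̄ₖ` of `r` at `p`. -/
def leviQuad {n : ℕ} (r : Cn n → ℝ) (p : Cn n) (v : Cn n) : ℂ :=
  ∑ j, ∑ k, wder (fun z => wderBar (fun w => (r w : ℂ)) z k) p j * v j * (starRingEnd ℂ) (v k)

/-- The symmetric complex Hessian form `∑_{j,k} ∂²r/∂z_j∂z_k(p) vⱼ vₖ` of `r` at `p`. -/
def symmQuad {n : ℕ} (r : Cn n → ℝ) (p : Cn n) (v : Cn n) : ℂ :=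
  ∑ j, ∑ k, wder (fun z => wder (fun w => (r w : ℂ)) z k) p j * v j * v k

/-- `r` is a `C^m` defining function of `Ω` exhibiting strong linear convexity:
the Levi form dominates the symmetric Hessian on complex tangent vectors. -/
def IsSLCDefining {n : ℕ} (m : ℕ) (Ω : Set (Cn n)) (r : Cn n → ℝ) : Prop :=
  ContDiff ℝ (m : ℕ∞) r ∧ Ω = {z | r z < 0} ∧
    (∀ p ∈ frontier Ω, fderiv ℝ r p ≠ 0) ∧
    ∀ p ∈ frontier Ω, ∀ v ∈ cxTangentAt r p, v ≠ 0 →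
      ‖symmQuad r p v‖ < (leviQuad r p v).re

/-- A bounded strongly linearly convex domain in `ℂⁿ` with `C^m`-smooth boundary. -/
def IsBoundedSLCDomain {n : ℕ} (m : ℕ) (Ω : Set (Cn n)) : Prop :=
  IsOpen Ω ∧ IsConnected Ω ∧ Bornology.IsBounded Ω ∧ ∃ r : Cn n → ℝ, IsSLCDefining m Ω r

/-- `ν` is the unit outward normal vector to `∂Ω` at `p`. -/
def IsUnitOutwardNormalAt {n : ℕ} (Ω : Set (Cn n)) (p ν : Cn n) : Prop :=
  ‖ν‖ = 1 ∧ (∀ v ∈ tangentConeAt ℝ (frontier Ω) p, (herm v ν).re = 0) ∧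
    ∃ ε > (0 : ℝ), ∀ t : ℝ, 0 < t → t < ε →
      p + t • ν ∉ closure Ω ∧ p - t • ν ∈ Ω

/-- `φs` is the dual mapping of the complex geodesic `φ` (with boundary derivative
data `φd`): it is holomorphic on `Δ`, continuous on `Δ̄`, satisfies
`φ*(ζ) = ζ μ(ζ) conj(ν∘φ(ζ))` on `∂Δ` with `μ > 0`, and is normalized by
`⟨φ', conj φ*⟩ = 1` on `Δ̄` (equivalently `∑ⱼ φⱼ' φ*ⱼ = 1`). -/
def IsDualMap {n : ℕ} (Ω : Set (Cn n)) (φ φd φs : ℂ → Cn n) : Prop :=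
  DifferentiableOn ℂ φs unitDisc ∧ ContinuousOn φs (closure unitDisc) ∧
    (∃ μ : ℂ → ℝ, ∀ ζ ∈ Metric.sphere (0 : ℂ) 1, 0 < μ ζ ∧
      ∃ ν : Cn n, IsUnitOutwardNormalAt Ω (φ ζ) ν ∧
        φs ζ = (ζ * (μ ζ : ℂ)) • conjVec ν) ∧
    ∀ ζ ∈ closure unitDisc, ∑ j, φd ζ j * φs ζ j = 1

/-- Full boundary data for a complex geodesic of `Ω`: the geodesic `φ`, its
continuous extension to `Δ̄`, a continuous extension `φd` of its derivative,
and a dual mapping `φs`. -/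
def GeodesicPkg {n : ℕ} (Ω : Set (Cn n)) (φ φd φs : ℂ → Cn n) : Prop :=
  IsComplexGeodesic Ω φ ∧ ContinuousOn φ (closure unitDisc) ∧
    ContinuousOn φd (closure unitDisc) ∧ (∀ ζ ∈ unitDisc, HasDerivAt φ (φd ζ) ζ) ∧
    IsDualMap Ω φ φd φs

/-- The one-parameter family of (parabolic, for `t ≠ 0`) automorphisms of the
unit disc fixing `1`:  `σ_t(ζ) = ((1 - it)ζ + it)/(-itζ + 1 + it)`. -/
def parabolicAut (t : ℝ) (ζ : ℂ) : ℂ :=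
  ((1 - Complex.I * t) * ζ + Complex.I * t) / (-(Complex.I * t) * ζ + 1 + Complex.I * t)

/-- The set `L_p = {v ∈ ℂⁿ : |v| = 1, ⟨v, ν_p⟩ > 0}` of inward directions at `p`. -/
def normalDirections {n : ℕ} (νp : Cn n) : Set (Cn n) :=
  {v | ‖v‖ = 1 ∧ 0 < herm v νp}

/-- `Φ` assigns to each `v ∈ L_p` the preferred complex geodesic of `Ω` associated
to `v` with base point `p`: `Φ v 1 = p`, `(Φ v)'(1) = ⟨v, ν_p⟩ v` and
`d/dθ|₀ |Φ* v (e^{iθ})| = 0`. -/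
def IsPreferredGeodesicFamily {n : ℕ} (Ω : Set (Cn n)) (p νp : Cn n)
    (Φ Φd Φs : Cn n → ℂ → Cn n) : Prop :=
  ∀ v ∈ normalDirections νp, GeodesicPkg Ω (Φ v) (Φd v) (Φs v) ∧ Φ v 1 = p ∧
    Φd v 1 = herm v νp • v ∧
    HasDerivAt (fun θ : ℝ => ‖Φs v (Complex.exp (θ * Complex.I))‖) 0 0

/-- Every point of `Ω̄ \ {p}` lies on exactly one closed preferred geodesic disc. -/
def UniqueGeodesicCover {n : ℕ} (Ω : Set (Cn n)) (p νp : Cn n)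
    (Φ : Cn n → ℂ → Cn n) : Prop :=
  ∀ z ∈ closure Ω \ {p}, ∃! vζ : Cn n × ℂ,
    vζ.1 ∈ normalDirections νp ∧ vζ.2 ∈ closure unitDisc ∧ Φ vζ.1 vζ.2 = z

/-- `Ψ` is the boundary spherical representation of `Ω̄` onto the closed unit
ball associated with the preferred geodesics at `p`: `Ψ p = ν_p` and
`Ψ(φ_v(ζ)) = ν_p + (ζ - 1)⟨v, ν_p⟩ v`. -/
def IsBoundarySphericalRep {n : ℕ} (Ω : Set (Cn n)) (p νp : Cn n)
    (Φ : Cn n → ℂ → Cn n) (Ψ : Cn n → Cn n) : Prop :=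
  MapsTo Ψ (closure Ω) (Metric.closedBall (0 : Cn n) 1) ∧ Ψ p = νp ∧
    ∀ v ∈ normalDirections νp, ∀ ζ ∈ closure unitDisc,
      Ψ (Φ v ζ) = νp + ((ζ - 1) * herm v νp) • v

/-- Plurisubharmonicity on `Ω` of a (real-valued) function: upper semicontinuity
together with the sub-mean value inequality on every closed complex disc in `Ω`. -/
def PSHOn {n : ℕ} (u : Cn n → ℝ) (Ω : Set (Cn n)) : Prop :=
  UpperSemicontinuousOn u Ω ∧
    ∀ (a b : Cn n) (R : ℝ), 0 < R → (∀ ζ : ℂ, ‖ζ‖ ≤ R → a + ζ • b ∈ Ω) →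
      u a ≤ (2 * Real.pi)⁻¹ *
        ∫ θ in (0 : ℝ)..(2 * Real.pi), u (a + ((R : ℂ) * Complex.exp (θ * Complex.I)) • b)

/-- Local boundedness (`u ∈ L^∞_loc(Ω)`). -/
def LocBoundedOn {n : ℕ} (u : Cn n → ℝ) (Ω : Set (Cn n)) : Prop :=
  ∀ x ∈ Ω, ∃ U ∈ nhds x, Bornology.IsBounded (u '' (U ∩ Ω))

/-- Maximality of `u` on `Ω` in the sense of Sadullaev.  By the fundamental
theorem of Bedford–Taylor, for a locally bounded plurisubharmonic `u` this is
equivalent to the homogeneous complex Monge–Ampère equation `(dd^c u)^n = 0`. -/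
def IsMaximalPSHOn {n : ℕ} (u : Cn n → ℝ) (Ω : Set (Cn n)) : Prop :=
  ∀ G : Set (Cn n), IsOpen G → closure G ⊆ Ω → IsCompact (closure G) →
    ∀ v : Cn n → ℝ, PSHOn v G →
      (∀ x ∈ frontier G, Filter.limsup v (nhdsWithin x G) ≤ u x) →
      ∀ z ∈ G, v z ≤ u z

/-- The horosphere `E_Ω(p, z₀, R)` of center `p ∈ ∂Ω`, pole `z₀ ∈ Ω` and radius
`R > 0`. -/
def horosphere {n : ℕ} (Ω : Set (Cn n)) (p z₀ : Cn n) (R : ℝ) : Set (Cn n) :=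
  {z ∈ Ω | ∃ L : ℝ,
    Tendsto (fun w => kobayashiDist Ω z w - kobayashiDist Ω z₀ w) (nhdsWithin p Ω) (nhds L) ∧
    L < (1 / 2) * Real.log R}

/-- The solution class of the pluricomplex Poisson kernel problem (1.2):
`u` is plurisubharmonic and locally bounded, solves `(dd^c u)^n = 0` (maximality),
is negative, tends to `0` at every boundary point other than `p`, and behaves
like `-|z - p|⁻¹` non-tangentially at `p`. -/
def SolvesMAProblem {n : ℕ} (Ω : Set (Cn n)) (p : Cn n) (u : Cn n → ℝ) : Prop :=
  PSHOn u Ω ∧ LocBoundedOn u Ω ∧ IsMaximalPSHOn u Ω ∧ (∀ z ∈ Ω, u z < 0) ∧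
    (∀ x ∈ frontier Ω, x ≠ p → Tendsto u (nhdsWithin x Ω) (nhds 0)) ∧
    ∀ β : ℝ, 1 < β → ∃ C : ℝ, 1 < C ∧ ∃ δ : ℝ, 0 < δ ∧
      ∀ z ∈ ntRegion Ω p β, ‖z - p‖ < δ →
        C⁻¹ < -u z * ‖z - p‖ ∧ -u z * ‖z - p‖ < C

/-- Membership in the Hölder class `C^{k,α}(s)`: `f` agrees on `s` with a global
`C^k` function whose top-order derivatives are `α`-Hölder on `s`. -/
def HolderExtends {E F : Type*} [NormedAddCommGroup E] [NormedSpace ℝ E]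
    [NormedAddCommGroup F] [NormedSpace ℝ F] (k : ℕ) (α : ℝ) (s : Set E) (f : E → F) : Prop :=
  ∃ g : E → F, EqOn g f s ∧ ContDiff ℝ (k : ℕ∞) g ∧
    ∃ C : NNReal, HolderOnWith C α.toNNReal (iteratedFDeriv ℝ k g) s

/-- `ϱ` is the Lempert left inverse of the complex geodesic `φ` with dual map `φs`:
`ϱ ∘ φ = Id` and `⟨z - φ(ϱ z), conj φ*(ϱ z)⟩ = 0` on `Ω`. -/
def IsLempertLeftInverse {n : ℕ} (Ω : Set (Cn n)) (φ φs : ℂ → Cn n) (ϱ : Cn n → ℂ) : Prop :=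
  MapsTo ϱ Ω unitDisc ∧ (∀ ζ ∈ unitDisc, ϱ (φ ζ) = ζ) ∧
    ∀ z ∈ Ω, ∑ j, (z j - φ (ϱ z) j) * φs (ϱ z) j = 0

/-- Closeness in the `C^{1,α}(Δ̄)` norm of `f` (with derivative `fd`) and `g`
(with derivative `gd`). -/
def C1alphaClose {n : ℕ} (α ε : ℝ) (f fd g gd : ℂ → Cn n) : Prop :=
  (∀ ζ ∈ closure unitDisc, ‖f ζ - g ζ‖ ≤ ε ∧ ‖fd ζ - gd ζ‖ ≤ ε) ∧
    ∀ ζ₁ ∈ closure unitDisc, ∀ ζ₂ ∈ closure unitDisc,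
      ‖(fd ζ₁ - gd ζ₁) - (fd ζ₂ - gd ζ₂)‖ ≤ ε * ‖ζ₁ - ζ₂‖ ^ α

/-- The pluricomplex Poisson kernel of the unit ball:
`P_{Bⁿ,q}(w) = -(1 - |w|²)/|1 - ⟨w, q⟩|²`. -/
def pluriPoissonBall {n : ℕ} (q w : Cn n) : ℝ :=
  -(1 - ‖w‖ ^ 2) / ‖1 - herm w q‖ ^ 2

/-- The Levi (complex Hessian) matrix `(∂²u/∂z_j∂z̄_k)` of `u : ℂⁿ → ℝ` at `z`. -/
def leviMatrix {n : ℕ} (u : Cn n → ℝ) (z : Cn n) : Matrix (Fin n) (Fin n) ℂ :=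
  Matrix.of fun j k => wder (fun w => wderBar (fun x => (u x : ℂ)) w k) z j

/-- The boundary derivative property `lim_{t→1⁻} u(γ(t))(1-t) = -Re(2/⟨γ'(1), ν_p⟩)`
along every non-tangential smooth curve `γ` terminating at `p`. -/
def SatisfiesBoundaryDerivativeProperty {n : ℕ} (Ω : Set (Cn n)) (p νp : Cn n)
    (u : Cn n → ℝ) : Prop :=
  ∀ γ : ℝ → Cn n, ContDiffOn ℝ (⊤ : ℕ∞) γ (Set.Icc (0 : ℝ) 1) → γ 1 = p →
    MapsTo γ (Set.Ico (0 : ℝ) 1) Ω →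
    (∃ β : ℝ, 1 < β ∧ ∀ t ∈ Set.Ico (0 : ℝ) 1, γ t ∈ ntRegion Ω p β) →
    Tendsto (fun t => u (γ t) * (1 - t)) (nhdsWithin 1 (Set.Ico (0 : ℝ) 1))
      (nhds (-(2 / herm (derivWithin γ (Set.Icc (0 : ℝ) 1) 1) νp).re))

end

/-!
Schwarz–Pick at the points `ζ_k` gives, in the limit `k → ∞`, Julia's lemma at `1` with
angular derivative `lim (1 - |f ζ_k|²)/(1 - |ζ_k|²)`. This limit is `1`: numerator and
denominator differ by `O(|ζ_k - 1|³)`, and in a Stolz region `|ζ_k - 1| ≤ β (1 - |ζ_k|)`,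
so the difference is `o(1 - |ζ_k|²)`. Julia's lemma with angular derivative `1` says exactly
that `Re (1/(1 - f z)) ≥ Re (1/(1 - z))`. With `p = 1/(1 - z)` and `q = 1/(1 - f z)` one has
`(f z - z)/(z - 1)² = p (q - p)/q`, and `Re (p (q - p) q̄) = |p|² Re (q - p) + |q - p|² Re p`.
-/

open ComplexConjugate Topology

theorem mem_unitDisc_iff_normSq_lt_one {z : ℂ} : z ∈ unitDisc ↔ normSq z < 1 := by
  rw [unitDisc, mem_ball_zero_iff, normSq_eq_norm_sq, sq_lt_one_iff₀ (norm_nonneg z)]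

theorem one_sub_conj_mul_ne_zero {a b : ℂ} (ha : a ∈ unitDisc) (hb : b ∈ unitDisc) :
    1 - conj a * b ≠ 0 := by
  rw [sub_ne_zero, ne_comm]
  refine ne_of_apply_ne normSq (ne_of_lt ?_)
  rw [normSq_mul, normSq_conj, normSq_one]
  rw [mem_unitDisc_iff_normSq_lt_one] at ha hb
  nlinarith [normSq_nonneg a, normSq_nonneg b]

theorem normSq_one_sub_conj_mul_sub_normSq_sub (a b : ℂ) :
    normSq (1 - conj a * b) - normSq (a - b) = (1 - normSq a) * (1 - normSq b) := by
  simp only [normSq_apply, sub_re, sub_im, mul_re, mul_im, conj_re, conj_im, one_re, one_im]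
  ring

noncomputable def discSwap (a z : ℂ) : ℂ := (a - z) / (1 - conj a * z)

theorem one_sub_normSq_discSwap {a b : ℂ} (ha : a ∈ unitDisc) (hb : b ∈ unitDisc) :
    1 - normSq (discSwap a b) = (1 - normSq a) * (1 - normSq b) / normSq (1 - conj a * b) := by
  have hD : normSq (1 - conj a * b) ≠ 0 := normSq_pos.2 (one_sub_conj_mul_ne_zero ha hb) |>.ne'
  rw [discSwap, normSq_div, eq_div_iff hD, sub_mul, div_mul_cancel₀ _ hD, one_mul]
  linarith [normSq_one_sub_conj_mul_sub_normSq_sub a b]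

theorem discSwap_mem {a b : ℂ} (ha : a ∈ unitDisc) (hb : b ∈ unitDisc) :
    discSwap a b ∈ unitDisc := by
  have hD := normSq_pos.2 (one_sub_conj_mul_ne_zero ha hb)
  have h := one_sub_normSq_discSwap ha hb
  rw [mem_unitDisc_iff_normSq_lt_one] at ha hb ⊢
  have : 0 < (1 - normSq a) * (1 - normSq b) / normSq (1 - conj a * b) := by
    apply div_pos (mul_pos _ _) hD <;> linarith
  linarith

theorem mapsTo_discSwap {a : ℂ} (ha : a ∈ unitDisc) : MapsTo (discSwap a) unitDisc unitDisc :=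
  fun _ hb => discSwap_mem ha hb

theorem differentiableOn_discSwap {a : ℂ} (ha : a ∈ unitDisc) :
    DifferentiableOn ℂ (discSwap a) unitDisc :=
  DifferentiableOn.div (by fun_prop) (by fun_prop) fun _ hb => one_sub_conj_mul_ne_zero ha hb

@[simp] theorem discSwap_self (a : ℂ) : discSwap a a = 0 := by simp [discSwap]

@[simp] theorem discSwap_zero (a : ℂ) : discSwap a 0 = a := by simp [discSwap]

theorem discSwap_discSwap {a b : ℂ} (ha : a ∈ unitDisc) (hb : b ∈ unitDisc) :
    discSwap a (discSwap a b) = b := by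
  have hD := one_sub_conj_mul_ne_zero ha hb
  have hD' := one_sub_conj_mul_ne_zero ha (discSwap_mem ha hb)
  rw [discSwap, div_eq_iff hD']
  have hx : (a - b) / (1 - conj a * b) * (1 - conj a * b) = a - b := div_mul_cancel₀ _ hD
  simp only [discSwap]
  linear_combination -hx

theorem norm_discSwap_le_of_mapsTo {f : ℂ → ℂ} (hf : DifferentiableOn ℂ f unitDisc)
    (hmap : MapsTo f unitDisc unitDisc) {z w : ℂ} (hz : z ∈ unitDisc) (hw : w ∈ unitDisc) :
    ‖discSwap (f w) (f z)‖ ≤ ‖discSwap w z‖ := by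
  set g := fun ζ => discSwap (f w) (f (discSwap w ζ))
  have hg : DifferentiableOn ℂ g unitDisc :=
    (differentiableOn_discSwap (hmap hw)).comp (hf.comp (differentiableOn_discSwap hw)
      (mapsTo_discSwap hw)) (hmap.comp (mapsTo_discSwap hw))
  have hgmap : MapsTo g unitDisc unitDisc :=
    (mapsTo_discSwap (hmap hw)).comp (hmap.comp (mapsTo_discSwap hw))
  have hschwarz := Complex.norm_le_norm_of_mapsTo_ball hg (hgmap.mono_right ball_subset_closedBall)
    (by simp [g]) (mem_ball_zero_iff.1 (discSwap_mem hw hz))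
  simpa only [g, discSwap_discSwap hw hz] using hschwarz

theorem schwarz_pick {f : ℂ → ℂ} (hf : DifferentiableOn ℂ f unitDisc)
    (hmap : MapsTo f unitDisc unitDisc) {z w : ℂ} (hz : z ∈ unitDisc) (hw : w ∈ unitDisc) :
    (1 - normSq w) * (1 - normSq z) * normSq (1 - conj (f w) * f z) ≤
      (1 - normSq (f w)) * (1 - normSq (f z)) * normSq (1 - conj w * z) := by
  have h : 1 - normSq (discSwap w z) ≤ 1 - normSq (discSwap (f w) (f z)) := by
    simp only [normSq_eq_norm_sq]
    gcongr
    exact norm_discSwap_le_of_mapsTo hf hmap hz hw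
  rwa [one_sub_normSq_discSwap hw hz, one_sub_normSq_discSwap (hmap hw) (hmap hz),
    div_le_div_iff₀ (normSq_pos.2 (one_sub_conj_mul_ne_zero hw hz))
      (normSq_pos.2 (one_sub_conj_mul_ne_zero (hmap hw) (hmap hz)))] at h

/-- Julia's lemma: if `f` has angular derivative `α` at `1` along `w`, then `f` maps each
horodisc `{z : |1 - z|² < R (1 - |z|²)}` into the horodisc of radius `α R`. -/
theorem julia_lemma {ι : Type*} {l : Filter ι} [l.NeBot] {f : ℂ → ℂ}
    (hf : DifferentiableOn ℂ f unitDisc) (hmap : MapsTo f unitDisc unitDisc)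
    {w : ι → ℂ} (hw : ∀ᶠ k in l, w k ∈ unitDisc) (hwlim : Tendsto w l (𝓝 1))
    (hfwlim : Tendsto (fun k => f (w k)) l (𝓝 1)) {α : ℝ}
    (hα : Tendsto (fun k => (1 - normSq (f (w k))) / (1 - normSq (w k))) l (𝓝 α))
    {z : ℂ} (hz : z ∈ unitDisc) :
    (1 - normSq z) * normSq (1 - f z) ≤ α * ((1 - normSq (f z)) * normSq (1 - z)) := by
  have hpt : ∀ᶠ k in l, (1 - normSq z) * normSq (1 - conj (f (w k)) * f z) ≤
      (1 - normSq (f (w k))) / (1 - normSq (w k)) *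
        ((1 - normSq (f z)) * normSq (1 - conj (w k) * z)) := by
    filter_upwards [hw] with k hk
    have hpos : 0 < 1 - normSq (w k) := sub_pos.2 (mem_unitDisc_iff_normSq_lt_one.1 hk)
    rw [div_mul_eq_mul_div, le_div_iff₀ hpos]
    linear_combination schwarz_pick hf hmap hz hk
  have hL : Tendsto (fun k => (1 - normSq z) * normSq (1 - conj (f (w k)) * f z)) l
      (𝓝 ((1 - normSq z) * normSq (1 - f z))) := by
    simpa [Function.comp_def] using ((by fun_prop : Continuous fun x : ℂ =>
      (1 - normSq z) * normSq (1 - conj x * f z)).tendsto 1).comp hfwlim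
  have hR : Tendsto (fun k => (1 - normSq (f z)) * normSq (1 - conj (w k) * z)) l
      (𝓝 ((1 - normSq (f z)) * normSq (1 - z))) := by
    simpa [Function.comp_def] using ((by fun_prop : Continuous fun x : ℂ =>
      (1 - normSq (f z)) * normSq (1 - conj x * z)).tendsto 1).comp hwlim
  exact le_of_tendsto_of_tendsto hL (hα.mul hR) hpt

theorem abs_normSq_sub_normSq_le {v w : ℂ} (hv : ‖v‖ ≤ 1) (hw : ‖w‖ ≤ 1) :
    |normSq w - normSq v| ≤ 2 * ‖v - w‖ := by
  rw [normSq_eq_norm_sq, normSq_eq_norm_sq, sq_sub_sq, abs_mul, norm_sub_rev]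
  have h := abs_norm_sub_norm_le w v
  rw [abs_of_nonneg (by positivity)]
  nlinarith [abs_nonneg (‖w‖ - ‖v‖)]

theorem abs_one_sub_normSq_div_sub_one_le {β C : ℝ} {v w : ℂ} (hw : w ∈ stolzRegion β)
    (hv : ‖v‖ ≤ 1) (hC : ‖v - w‖ ≤ C * ‖w - 1‖ ^ 3) :
    |(1 - normSq v) / (1 - normSq w) - 1| ≤ 2 * C * β * ‖w - 1‖ ^ 2 := by
  obtain ⟨hw1, hstolz⟩ := hw
  have hn : ‖w‖ < 1 := mem_ball_zero_iff.1 hw1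
  have hd : 0 < 1 - normSq w := sub_pos.2 (mem_unitDisc_iff_normSq_lt_one.1 hw1)
  have hd' : 1 - ‖w‖ ≤ 1 - normSq w := by
    rw [normSq_eq_norm_sq]
    nlinarith [norm_nonneg w]
  have hw1' : 0 < ‖w - 1‖ := norm_pos_iff.2 (sub_ne_zero.2 fun h => by simp [h] at hn)
  have hC0 : 0 ≤ C := nonneg_of_mul_nonneg_left ((norm_nonneg _).trans hC) (pow_pos hw1' 3)
  have hcube : ‖w - 1‖ ^ 3 ≤ β * (1 - normSq w) * ‖w - 1‖ ^ 2 := by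
    have hβ : 0 ≤ β := nonneg_of_mul_nonneg_left ((norm_nonneg _).trans hstolz.le) (by linarith)
    calc ‖w - 1‖ ^ 3 = ‖w - 1‖ * ‖w - 1‖ ^ 2 := by ring
      _ ≤ β * (1 - ‖w‖) * ‖w - 1‖ ^ 2 := by gcongr
      _ ≤ β * (1 - normSq w) * ‖w - 1‖ ^ 2 := by gcongr
  rw [div_sub_one hd.ne', abs_div, abs_of_pos hd, div_le_iff₀ hd, sub_sub_sub_cancel_left]
  calc |normSq w - normSq v| ≤ 2 * ‖v - w‖ := abs_normSq_sub_normSq_le hv hn.le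
    _ ≤ 2 * (C * ‖w - 1‖ ^ 3) := by gcongr
    _ ≤ 2 * (C * (β * (1 - normSq w) * ‖w - 1‖ ^ 2)) := by gcongr
    _ = 2 * C * β * ‖w - 1‖ ^ 2 * (1 - normSq w) := by ring

theorem tendsto_one_sub_normSq_div_of_stolzRegion {ι : Type*} {l : Filter ι} {v w : ι → ℂ}
    {β C : ℝ} (hwlim : Tendsto w l (𝓝 1)) (hw : ∀ᶠ k in l, w k ∈ stolzRegion β)
    (hv : ∀ᶠ k in l, ‖v k‖ ≤ 1) (hC : ∀ k, ‖v k - w k‖ ≤ C * ‖w k - 1‖ ^ 3) :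
    Tendsto (fun k => (1 - normSq (v k)) / (1 - normSq (w k))) l (𝓝 1) := by
  have hbound : Tendsto (fun k => 2 * C * β * ‖w k - 1‖ ^ 2) l (𝓝 0) := by
    simpa using ((tendsto_iff_norm_sub_tendsto_zero.1 hwlim).pow 2).const_mul (2 * C * β)
  rw [tendsto_iff_norm_sub_tendsto_zero]
  refine squeeze_zero' (Eventually.of_forall fun k => norm_nonneg _) ?_ hbound
  filter_upwards [hw, hv] with k hwk hvk
  exact abs_one_sub_normSq_div_sub_one_le hwk hvk (hC k)

theorem tendsto_of_norm_sub_le_mul_pow {E ι : Type*} [SeminormedAddCommGroup E] {l : Filter ι}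
    {v w : ι → E} {a : E} {C : ℝ} {n : ℕ} (hn : n ≠ 0) (hwlim : Tendsto w l (𝓝 a))
    (hC : ∀ k, ‖v k - w k‖ ≤ C * ‖w k - a‖ ^ n) : Tendsto v l (𝓝 a) := by
  have hbound : Tendsto (fun k => C * ‖w k - a‖ ^ n) l (𝓝 0) := by
    simpa [hn] using ((tendsto_iff_norm_sub_tendsto_zero.1 hwlim).pow n).const_mul C
  simpa using (squeeze_zero_norm hC hbound).add hwlim

theorem ne_one_of_mem_unitDisc {z : ℂ} (hz : z ∈ unitDisc) : z ≠ 1 := by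
  rintro rfl
  simp [unitDisc] at hz

theorem two_mul_re_inv_one_sub {z : ℂ} (hz : z ≠ 1) :
    2 * (1 - z)⁻¹.re = 1 + (1 - normSq z) / normSq (1 - z) := by
  have hN : normSq (1 - z) ≠ 0 := normSq_pos.2 (sub_ne_zero.2 hz.symm) |>.ne'
  rw [inv_re]
  field_simp
  simp only [normSq_apply, sub_re, sub_im, one_re, one_im]
  ring

theorem re_inv_one_sub_le_of_horodisc {z w : ℂ} (hz : z ∈ unitDisc) (hw : w ∈ unitDisc)
    (h : (1 - normSq z) * normSq (1 - w) ≤ (1 - normSq w) * normSq (1 - z)) :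
    (1 - z)⁻¹.re ≤ (1 - w)⁻¹.re := by
  have hz1 := ne_one_of_mem_unitDisc hz
  have hw1 := ne_one_of_mem_unitDisc hw
  have key : (1 - normSq z) / normSq (1 - z) ≤ (1 - normSq w) / normSq (1 - w) := by
    rwa [div_le_div_iff₀ (normSq_pos.2 (sub_ne_zero.2 hz1.symm))
      (normSq_pos.2 (sub_ne_zero.2 hw1.symm))]
  linarith [two_mul_re_inv_one_sub hz1, two_mul_re_inv_one_sub hw1]

theorem re_mul_sub_div_nonneg {p q : ℂ} (hp : 0 ≤ p.re) (hpq : p.re ≤ q.re) :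
    0 ≤ (p * (q - p) / q).re := by
  have key : (p * (q - p)).re * q.re + (p * (q - p)).im * q.im =
      normSq p * (q - p).re + normSq (q - p) * p.re := by
    simp only [normSq_apply, mul_re, mul_im, sub_re, sub_im]
    ring
  rw [div_re, ← add_div, key]
  have : 0 ≤ (q - p).re := by rw [sub_re]; linarith
  exact div_nonneg (add_nonneg (mul_nonneg (normSq_nonneg _) this)
    (mul_nonneg (normSq_nonneg _) hp)) (normSq_nonneg _)

theorem re_sub_div_sub_one_sq_nonneg {z w : ℂ} (hz : z ∈ unitDisc) (hw : w ∈ unitDisc)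
    (h : (1 - z)⁻¹.re ≤ (1 - w)⁻¹.re) : 0 ≤ ((w - z) / (z - 1) ^ 2).re := by
  have hz1 := sub_ne_zero.2 (ne_one_of_mem_unitDisc hz).symm
  have hz1' := sub_ne_zero.2 (ne_one_of_mem_unitDisc hz)
  have hw1 := sub_ne_zero.2 (ne_one_of_mem_unitDisc hw).symm
  have hp : 0 ≤ (1 - z)⁻¹.re := by
    have hnonneg : 0 ≤ (1 - normSq z) / normSq (1 - z) :=
      div_nonneg (sub_nonneg.2 (mem_unitDisc_iff_normSq_lt_one.1 hz).le) (normSq_nonneg _)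
    linarith [two_mul_re_inv_one_sub (ne_one_of_mem_unitDisc hz)]
  have hid : (w - z) / (z - 1) ^ 2 = (1 - z)⁻¹ * ((1 - w)⁻¹ - (1 - z)⁻¹) / (1 - w)⁻¹ := by
    field_simp
    ring
  rw [hid]
  exact re_mul_sub_div_nonneg hp h

theorem burns_krantz_halfplane_positivity_general
    (f : ℂ → ℂ) (hf : DifferentiableOn ℂ f unitDisc) (hmap : MapsTo f unitDisc unitDisc)
    (ζ : ℕ → ℂ)
    (hlim : Tendsto ζ atTop (nhds 1))
    (β : ℝ) (hnt : ∀ᶠ k in atTop, ζ k ∈ stolzRegion β)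
    (C : ℝ) (hC : ∀ k, ‖f (ζ k) - ζ k‖ ≤ C * ‖ζ k - 1‖ ^ 3) :
    ∀ z ∈ unitDisc, 0 ≤ ((f z - z) / (z - 1) ^ 2).re := by
  intro z hz
  have hdisc : ∀ᶠ k in atTop, ζ k ∈ unitDisc := hnt.mono fun _ hk => hk.1
  have hflim : Tendsto (fun k => f (ζ k)) atTop (𝓝 1) :=
    tendsto_of_norm_sub_le_mul_pow three_ne_zero hlim hC
  have hratio := tendsto_one_sub_normSq_div_of_stolzRegion hlim hnt
    (hdisc.mono fun _ hk => (mem_ball_zero_iff.1 (hmap hk)).le) hC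
  have hjulia := julia_lemma hf hmap hdisc hlim hflim hratio hz
  rw [one_mul] at hjulia
  exact re_sub_div_sub_one_sq_nonneg hz (hmap hz)
    (re_inv_one_sub_le_of_horodisc hz (hmap hz) hjulia)

/-- **Lemma 2.1 (i).**  Let `f : Δ → Δ` be holomorphic and suppose
`f(ζ_k) = ζ_k + O(|ζ_k - 1|³)` along a sequence `ζ_k → 1` non-tangentially.
Then `Re((f(ζ) - ζ)/(ζ - 1)²) ≥ 0` on `Δ`. -/
theorem burns_krantz_halfplane_positivity
    (f : ℂ → ℂ) (hf : DifferentiableOn ℂ f unitDisc) (hmap : MapsTo f unitDisc unitDisc)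
    (ζ : ℕ → ℂ) (hζ : ∀ k, ζ k ∈ unitDisc)
    (hlim : Tendsto ζ atTop (nhds 1))
    (β : ℝ) (hβ : 1 < β) (hnt : ∀ᶠ k in atTop, ζ k ∈ stolzRegion β)
    (C : ℝ) (hC : ∀ k, ‖f (ζ k) - ζ k‖ ≤ C * ‖ζ k - 1‖ ^ 3) :
    ∀ z ∈ unitDisc, 0 ≤ ((f z - z) / (z - 1) ^ 2).re :=
  burns_krantz_halfplane_positivity_general f hf hmap ζ hlim β hnt C hC
end

section
/- Let Ω ⊂ ℂⁿ (n > 1) be a bounded strongly linearly convex domain with C³-smooth boundary, φ a complex geodesic of Ω, and ρ = φ∘ϱ ∈ O(Ω, Ω) the Lempert retraction associated to φ (ϱ the Lempert left inverse). Then for every ζ ∈ ∂Δ and every v ∈ ℂⁿ, the differential of ϱ = φ^{−1}∘ρ at the boundary point φ(ζ) satisfies d(φ^{−1}∘ρ)_{φ(ζ)}(v) = ⟨v, ν∘φ(ζ)⟩ / ⟨φ'(ζ), ν∘φ(ζ)⟩, where ν denotes the unit outward normal vector field of ∂Ω. -/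
open Complex Metric Set Filter
open scoped ComplexOrder

/-!
Differentiating the relation `∑ⱼ (zⱼ - φ(ϱ z)ⱼ) φ*(ϱ z)ⱼ = 0` at a point `φ(w)` of the geodesic
disc, where its first factor vanishes, and using the normalization `∑ⱼ φ'ⱼ φ*ⱼ = 1` gives
`dϱ_{φ(w)}(v) = ∑ⱼ vⱼ φ*ⱼ(w)`. Both sides are continuous up to `∂Δ`, so the identity persists at
`ζ ∈ ∂Δ`, where `φ*(ζ) = ζ μ(ζ) conj ν` and the normalization becomes `ζ μ(ζ) ⟨φ'(ζ), ν⟩ = 1`.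
That `ν` may be any unit outward normal at `φ(ζ)` rests on uniqueness of the normal: it is
`ℝ`-orthogonal to `ker dr`, which lies in the tangent cone of `∂Ω` by the implicit function
theorem.
-/

open scoped Topology RealInnerProductSpace

section OrthogonalToKernel

variable {E : Type*} [NormedAddCommGroup E] [InnerProductSpace ℝ E] {L : E →L[ℝ] ℝ} {ν ν' : E}

theorem apply_ne_zero_of_orthogonal_ker (hν : ‖ν‖ = 1) (hker : ∀ u, L u = 0 → ⟪u, ν⟫ = 0) :
    L ν ≠ 0 := fun h => by
  simpa [real_inner_self_eq_norm_sq, hν] using hker ν h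

theorem inner_eq_div_of_orthogonal_ker (hν : ‖ν‖ = 1) (hker : ∀ u, L u = 0 → ⟪u, ν⟫ = 0)
    (x : E) : ⟪x, ν⟫ = L x / L ν := by
  have hLν := apply_ne_zero_of_orthogonal_ker hν hker
  have hx := hker (x - (L x / L ν) • ν) (by
    rw [map_sub, map_smul, smul_eq_mul, div_mul_cancel₀ _ hLν, sub_self])
  rwa [inner_sub_left, real_inner_smul_left, real_inner_self_eq_norm_sq, hν, one_pow, mul_one,
    sub_eq_zero] at hx

theorem eq_of_orthogonal_ker (hν : ‖ν‖ = 1) (hν' : ‖ν'‖ = 1)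
    (hker : ∀ u, L u = 0 → ⟪u, ν⟫ = 0) (hker' : ∀ u, L u = 0 → ⟪u, ν'⟫ = 0)
    (hLν : 0 ≤ L ν) (hLν' : 0 ≤ L ν') : ν = ν' := by
  have hνν' := inner_eq_div_of_orthogonal_ker hν' hker' ν
  have hν'ν := inner_eq_div_of_orthogonal_ker hν hker ν'
  have hpos := hLν.lt_of_ne (apply_ne_zero_of_orthogonal_ker hν hker).symm
  have hpos' := hLν'.lt_of_ne (apply_ne_zero_of_orthogonal_ker hν' hker').symm
  rw [real_inner_comm, hνν', div_eq_div_iff hpos'.ne' hpos.ne'] at hν'ν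
  have heq : L ν = L ν' := by nlinarith
  refine (inner_eq_one_iff_of_norm_eq_one (𝕜 := ℝ) hν hν').mp ?_
  rw [hνν', heq, div_self hpos'.ne']

end OrthogonalToKernel

theorem mem_frontier_setOf_neg_of_fderiv_ne_zero {E : Type*} [NormedAddCommGroup E]
    [NormedSpace ℝ E] {r : E → ℝ} {q : E} (hrq : r q = 0) (hq : fderiv ℝ r q ≠ 0) :
    q ∈ frontier {z | r z < 0} := by
  refine ⟨?_, fun h => (interior_subset (s := {z | r z < 0}) h).ne hrq⟩
  by_contra hcl
  refine hq (IsLocalMin.fderiv_eq_zero ?_)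
  filter_upwards [isClosed_closure.isOpen_compl.mem_nhds hcl] with z hz
  rw [hrq]
  exact not_lt.mp fun h => hz (subset_closure h)

theorem ker_fderiv_subset_tangentConeAt_frontier {E : Type*} [NormedAddCommGroup E]
    [NormedSpace ℝ E] [CompleteSpace E] {r : E → ℝ} (hr : ContDiff ℝ 1 r) {p : E}
    (hrp : r p = 0) (hp : fderiv ℝ r p ≠ 0) :
    ∀ u, fderiv ℝ r p u = 0 → u ∈ tangentConeAt ℝ (frontier {z | r z < 0}) p := by
  intro u hu
  set L := fderiv ℝ r p
  have hs : HasStrictFDerivAt r L p := hr.contDiffAt.hasStrictFDerivAt one_ne_zero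
  have hL : (L : E →ₗ[ℝ] ℝ).range = ⊤ :=
    Module.Dual.range_eq_top_of_ne_zero (ContinuousLinearMap.coe_injective.ne hp)
  set g := hs.implicitFunction r L hL (r p)
  have hg : HasStrictFDerivAt g (L : E →ₗ[ℝ] ℝ).ker.subtypeL 0 := hs.to_implicitFunction hL
  have hg0 : g 0 = p := hs.implicitFunction_apply_image hL
  have hV : {y | r (g y) = 0 ∧ fderiv ℝ r (g y) ≠ 0} ∈ 𝓝 0 := by
    have hlevel : ∀ᶠ y in 𝓝 0, r (g y) = r p :=
      (tendsto_const_nhds.prodMk_nhds tendsto_id).eventually (hs.map_implicitFunction_eq hL)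
    have hreg : ∀ᶠ y in 𝓝 0, fderiv ℝ r (g y) ≠ 0 := by
      have h := (hr.continuous_fderiv one_ne_zero).continuousAt.eventually_ne hp
      rw [← hg0] at h
      exact hg.continuousAt.eventually h
    filter_upwards [hlevel, hreg] with y hy hy'
    exact ⟨hy.trans hrp, hy'⟩
  have hcone := hg.hasFDerivAt.hasFDerivWithinAt.mapsTo_tangent_cone
    ((tangentConeAt_of_mem_nhds (𝕜 := ℝ) hV).symm ▸ mem_univ (⟨u, hu⟩ : (L : E →ₗ[ℝ] ℝ).ker))
  rw [hg0] at hcone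
  refine tangentConeAt_mono ?_ hcone
  rintro _ ⟨y, ⟨hy, hy'⟩, rfl⟩
  exact mem_frontier_setOf_neg_of_fderiv_ne_zero hy hy'

theorem re_herm_eq_inner {n : ℕ} (u ν : Cn n) : (herm u ν).re = ⟪u, ν⟫ := by
  rw [PiLp.inner_apply, herm, Complex.re_sum]
  refine Finset.sum_congr rfl fun j _ => ?_
  rw [Complex.inner, mul_re, mul_re, conj_re, conj_im, conj_re, conj_im]
  ring

namespace IsUnitOutwardNormalAt

variable {n : ℕ} {Ω : Set (Cn n)} {p ν : Cn n}

theorem mem_frontier (h : IsUnitOutwardNormalAt Ω p ν) : p ∈ frontier Ω := by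
  obtain ⟨hν, -, ε, hε, hside⟩ := h
  have hseg : Tendsto (fun t : ℝ => t • ν) (𝓝[>] 0) (𝓝 0) :=
    ((continuous_id.smul continuous_const : Continuous fun t : ℝ => t • ν).tendsto' 0 0
      (zero_smul ℝ ν)).mono_left nhdsWithin_le_nhds
  have hnear : ∀ᶠ t in 𝓝[>] (0 : ℝ), t < ε := nhdsWithin_le_nhds (gt_mem_nhds hε)
  have hright : ∀ᶠ t in 𝓝[>] (0 : ℝ), 0 < t := self_mem_nhdsWithin
  refine ⟨?_, fun hint => ?_⟩
  · have hlim : Tendsto (fun t : ℝ => p - t • ν) (𝓝[>] 0) (𝓝 p) := by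
      simpa using tendsto_const_nhds.sub hseg
    exact mem_closure_of_tendsto hlim
      (by filter_upwards [hright, hnear] with t ht ht' using (hside t ht ht').2)
  · have hmem : ∀ᶠ t in 𝓝[>] (0 : ℝ), p + t • ν ∈ interior Ω :=
      (by simpa using tendsto_const_nhds.add hseg : Tendsto _ _ (𝓝 p)).eventually
        (isOpen_interior.mem_nhds hint)
    obtain ⟨t, ht, ht', htΩ⟩ := (hright.and (hnear.and hmem)).exists
    exact (hside t ht ht').1 (subset_closure (interior_subset htΩ))

theorem apply_eq_zero {r : Cn n → ℝ} (hr : Continuous r)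
    (h : IsUnitOutwardNormalAt {z | r z < 0} p ν) : r p = 0 :=
  frontier_lt_subset_eq hr continuous_const h.mem_frontier

theorem fderiv_nonneg {r : Cn n → ℝ} (hr : ContDiff ℝ 1 r)
    (h : IsUnitOutwardNormalAt {z | r z < 0} p ν) : 0 ≤ fderiv ℝ r p ν := by
  have hrp := h.apply_eq_zero hr.continuous
  obtain ⟨-, -, ε, hε, hside⟩ := h
  have hmin : IsLocalMinOn r {q | r p ≤ r q} p := Filter.eventually_inf_principal.mpr
    (Eventually.of_forall fun _ hq => hq)
  refine hmin.hasFDerivWithinAt_nonneg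
    (hr.differentiable one_ne_zero p).hasFDerivAt.hasFDerivWithinAt
    (mem_posTangentConeAt_of_frequently_mem (Eventually.frequently ?_))
  filter_upwards [Ioo_mem_nhdsGT hε] with t ht
  rw [hrp]
  exact not_lt.mp fun hneg => (hside t ht.1 ht.2).1 (subset_closure hneg)

theorem inner_eq_zero_of_fderiv_eq_zero {r : Cn n → ℝ} (hr : ContDiff ℝ 1 r)
    (h : IsUnitOutwardNormalAt {z | r z < 0} p ν) (hp : fderiv ℝ r p ≠ 0) {u : Cn n}
    (hu : fderiv ℝ r p u = 0) : ⟪u, ν⟫ = 0 := by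
  rw [← re_herm_eq_inner]
  exact h.2.1 u
    (ker_fderiv_subset_tangentConeAt_frontier hr (h.apply_eq_zero hr.continuous) hp u hu)

theorem unique {r : Cn n → ℝ} (hr : ContDiff ℝ 1 r) {ν' : Cn n}
    (h : IsUnitOutwardNormalAt {z | r z < 0} p ν)
    (h' : IsUnitOutwardNormalAt {z | r z < 0} p ν') (hp : fderiv ℝ r p ≠ 0) : ν = ν' :=
  eq_of_orthogonal_ker h.1 h'.1
    (fun _ => h.inner_eq_zero_of_fderiv_eq_zero hr hp)
    (fun _ => h'.inner_eq_zero_of_fderiv_eq_zero hr hp)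
    (h.fderiv_nonneg hr) (h'.fderiv_nonneg hr)

end IsUnitOutwardNormalAt

theorem HasDerivAt.euclidean_apply {𝕜 ι : Type*} [RCLike 𝕜] [Fintype ι]
    {f : 𝕜 → EuclideanSpace 𝕜 ι} {f' : EuclideanSpace 𝕜 ι} {t : 𝕜} (h : HasDerivAt f f' t)
    (j : ι) : HasDerivAt (fun s => f s j) (f' j) t :=
  (PiLp.hasFDerivAt_apply 2 (f t) j).comp_hasDerivAt t h

theorem leftInverse_fderiv_apply_eq_sum {n : ℕ} {φ φs : ℂ → Cn n} {ϱ : Cn n → ℂ}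
    {L : Cn n →L[ℂ] ℂ} {w : ℂ} {φ' : Cn n} (hϱ : HasFDerivAt ϱ L (φ w)) (hϱw : ϱ (φ w) = w)
    (hφ : HasDerivAt φ φ' w) (hφs : DifferentiableAt ℂ φs w)
    (horth : ∀ᶠ z in 𝓝 (φ w), ∑ j, (z j - φ (ϱ z) j) * φs (ϱ z) j = 0)
    (hnorm : ∑ j, φ' j * φs w j = 1) (v : Cn n) :
    L v = ∑ j, v j * φs w j := by
  set c : ℂ → Cn n := fun t => φ w + t • v
  have hc : HasDerivAt c v 0 := by
    simpa [c] using ((hasDerivAt_id (0 : ℂ)).smul_const v).const_add (φ w)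
  have hc0 : c 0 = φ w := by simp [c]
  have hϱc : HasDerivAt (fun t => ϱ (c t)) (L v) 0 := by
    rw [← hc0] at hϱ
    exact hϱ.comp_hasDerivAt 0 hc
  have hϱc0 : w = ϱ (c 0) := by rw [hc0, hϱw]
  have hφc : HasDerivAt (fun t => φ (ϱ (c t))) (L v • φ') 0 :=
    hφ.scomp_of_eq 0 hϱc hϱc0
  have hφsc : HasDerivAt (fun t => φs (ϱ (c t))) (L v • deriv φs w) 0 :=
    hφs.hasDerivAt.scomp_of_eq 0 hϱc hϱc0
  have hsum := HasDerivAt.fun_sum (u := Finset.univ) fun j _ =>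
    ((hc.euclidean_apply j).sub (hφc.euclidean_apply j)).mul (hφsc.euclidean_apply j)
  have hzero : HasDerivAt (fun t => ∑ j, (c t j - φ (ϱ (c t)) j) * φs (ϱ (c t)) j) 0 0 :=
    (hasDerivAt_const 0 0).congr_of_eventuallyEq
      ((hc0 ▸ hc.continuousAt.tendsto).eventually horth)
  have hderiv := hsum.unique hzero
  simp only [PiLp.smul_apply, smul_eq_mul, hc0, hϱw, Pi.sub_apply, sub_self, zero_mul, add_zero]
    at hderiv
  rw [← mul_one (L v), ← hnorm, Finset.mul_sum, eq_comm, ← sub_eq_zero,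
    ← Finset.sum_sub_distrib, ← hderiv]
  refine Finset.sum_congr rfl fun j _ => ?_
  ring

theorem sum_mul_smul_conjVec {n : ℕ} (v ν : Cn n) (c : ℂ) :
    ∑ j, v j * (c • conjVec ν) j = c * herm v ν := by
  simp only [herm, conjVec, Finset.mul_sum, PiLp.smul_apply, smul_eq_mul]
  exact Finset.sum_congr rfl fun j _ => by ring

theorem lempert_left_inverse_boundary_differential_general
    {n : ℕ} (Ω : Set (Cn n)) (hΩ : IsBoundedSLCDomain 3 Ω)
    (φ φd φs : ℂ → Cn n) (hpkg : GeodesicPkg Ω φ φd φs)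
    (ϱ : Cn n → ℂ) (hϱ : IsLempertLeftInverse Ω φ φs ϱ)
    (D : Cn n → Cn n →L[ℂ] ℂ)
    (hD : ∀ q ∈ closure Ω, HasFDerivWithinAt ϱ (D q) (closure Ω) q)
    (hDc : ContinuousOn D (closure Ω)) :
    ∀ ζ ∈ Metric.sphere (0 : ℂ) 1, ∀ ν : Cn n, IsUnitOutwardNormalAt Ω (φ ζ) ν →
      ∀ v : Cn n, D (φ ζ) v = herm v ν / herm (φd ζ) ν := by
  obtain ⟨hΩo, -, -, r, hr, rfl, hreg, -⟩ := hΩ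
  obtain ⟨⟨-, hφΩ, -⟩, hφc, -, hφd, hφs, hφsc, hdual, hnorm⟩ := hpkg
  obtain ⟨-, hleft, horth⟩ := hϱ
  have hdisc : ∀ v, EqOn (fun w => D (φ w) v) (fun w => ∑ j, v j * φs w j) unitDisc := by
    intro v w hw
    have hΩw := hΩo.mem_nhds (hφΩ hw)
    exact leftInverse_fderiv_apply_eq_sum
      ((hD _ (subset_closure (hφΩ hw))).hasFDerivAt (mem_of_superset hΩw subset_closure))
      (hleft w hw) (hφd w hw) ((hφs w hw).differentiableAt (isOpen_ball.mem_nhds hw))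
      (eventually_of_mem hΩw horth) (hnorm w (subset_closure hw)) v
  have hclosedDisc : ∀ v,
      EqOn (fun w => D (φ w) v) (fun w => ∑ j, v j * φs w j) (closure unitDisc) := fun v =>
    (hdisc v).of_subset_closure
      ((hDc.comp hφc (hφΩ.closure_of_continuousOn hφc)).clm_apply continuousOn_const)
      (by fun_prop) subset_closure subset_rfl
  intro ζ hζ ν hν v
  have hζ' : ζ ∈ closure unitDisc := by
    rw [unitDisc, closure_ball _ one_ne_zero]
    exact sphere_subset_closedBall hζ
  obtain ⟨μ, hμ⟩ := hdual
  obtain ⟨-, ν₀, hν₀, hφsζ⟩ := hμ ζ hζ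
  obtain rfl : ν = ν₀ := hν.unique (hr.of_le (by norm_num)) hν₀ (hreg _ hν.mem_frontier)
  have hpair := hnorm ζ hζ'
  rw [hφsζ, sum_mul_smul_conjVec] at hpair
  calc D (φ ζ) v = ∑ j, v j * φs ζ j := hclosedDisc v hζ'
    _ = herm v ν / herm (φd ζ) ν := by
      rw [hφsζ, sum_mul_smul_conjVec, eq_div_iff (right_ne_zero_of_mul_eq_one hpair),
        mul_right_comm, hpair, one_mul]

/-- **Proposition 4.1 (i).**  Let `Ω ⊂ ℂⁿ` (`n > 1`) be a bounded strongly linearly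
convex domain with `C³`-smooth boundary, `φ` a complex geodesic with Lempert left
inverse `ϱ = φ⁻¹∘ρ`.  For every `ζ ∈ ∂Δ` and `v ∈ ℂⁿ` the boundary differential of
`ϱ` at `φ(ζ)` is `d(φ⁻¹∘ρ)_{φ(ζ)}(v) = ⟨v, ν∘φ(ζ)⟩ / ⟨φ'(ζ), ν∘φ(ζ)⟩`. -/
theorem lempert_left_inverse_boundary_differential
    {n : ℕ} (hn : 1 < n) (Ω : Set (Cn n)) (hΩ : IsBoundedSLCDomain 3 Ω)
    (φ φd φs : ℂ → Cn n) (hpkg : GeodesicPkg Ω φ φd φs)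
    (ϱ : Cn n → ℂ) (hϱ : IsLempertLeftInverse Ω φ φs ϱ)
    (D : Cn n → Cn n →L[ℂ] ℂ)
    (hD : ∀ q ∈ closure Ω, HasFDerivWithinAt ϱ (D q) (closure Ω) q)
    (hDc : ContinuousOn D (closure Ω)) :
    ∀ ζ ∈ Metric.sphere (0 : ℂ) 1, ∀ ν : Cn n, IsUnitOutwardNormalAt Ω (φ ζ) ν →
      ∀ v : Cn n, D (φ ζ) v = herm v ν / herm (φd ζ) ν :=
  lempert_left_inverse_boundary_differential_general Ω hΩ φ φd φs hpkg ϱ hϱ D hD hDc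
end
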